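/- arXiv:2507.21497 — 2 statements merged into one kernel-verified Lean document; each statement's English description precedes it below -/
import Mathlib

section
/- Pathwise form of the adjoint discrete-time path-kernel identity: in the concrete setting below, the tangent expression equals the adjoint expression on each path, i.e. ⟨∇Φ(x_N), v_N⟩ + (Φ(x_N) − Φ^avg) ∑_{n=0}^{N−1} (α_n / σ(x_n)) ⟨b_n, v_n⟩ = ⟨ν_0, v_0⟩ + ∑_{k=0}^{N−1} ⟨ν_{k+1}, δf_k + δσ_k b_k⟩. -/
/-! The tangent recursion is affine, `v_{n+1} = A_n v_n + s_n` with
`A_n = -α_n I + ∇f(x_n) + b_n ∇σ(x_n)ᵀ`, and the adjoint recursion is the transposed one,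
`ν_n = A_nᵀ ν_{n+1} + r_n` with `r_n = (Φ(x_N) - Φ^avg)(α_n / σ(x_n)) b_n`. Hence each pairing
`⟨ν_{n+1}, v_{n+1}⟩ - ⟨ν_n, v_n⟩ = ⟨ν_{n+1}, s_n⟩ - ⟨r_n, v_n⟩` loses the `A_n` terms, and
summing this telescoping identity over `n < N` gives the claim. -/

open Matrix

/-- The gradient vector of a scalar function on `ℝ^M`, in the standard basis. -/
noncomputable def gradVec {M : ℕ} (g : (Fin M → ℝ) → ℝ) (x : Fin M → ℝ) : Fin M → ℝ :=
  fun i => fderiv ℝ g x (Pi.single i 1)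

/-- The Jacobian matrix of a map `ℝ^M → ℝ^M`, in the standard basis. -/
noncomputable def jac {M : ℕ} (f : (Fin M → ℝ) → (Fin M → ℝ)) (x : Fin M → ℝ) :
    Matrix (Fin M) (Fin M) ℝ :=
  Matrix.of fun i j => fderiv ℝ f x (Pi.single j 1) i

open Finset

section Duality

variable {R ι : Type*} [CommRing R] [Fintype ι]

theorem dotProduct_affine_step_sub (A : Matrix ι ι R) (μ w s r : ι → R) :
    μ ⬝ᵥ (A *ᵥ w + s) - (Aᵀ *ᵥ μ + r) ⬝ᵥ w = μ ⬝ᵥ s - r ⬝ᵥ w := by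
  rw [mulVec_transpose, dotProduct_add, add_dotProduct, dotProduct_mulVec]
  ring

theorem dotProduct_tangent_adjoint_duality {A : ℕ → Matrix ι ι R} {s r v ν : ℕ → ι → R}
    (N : ℕ) (hv : ∀ n < N, v (n + 1) = A n *ᵥ v n + s n)
    (hν : ∀ n < N, ν n = (A n)ᵀ *ᵥ ν (n + 1) + r n) :
    ν N ⬝ᵥ v N + ∑ n ∈ range N, r n ⬝ᵥ v n
      = ν 0 ⬝ᵥ v 0 + ∑ n ∈ range N, ν (n + 1) ⬝ᵥ s n := by
  have step : ∀ n ∈ range N,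
      ν (n + 1) ⬝ᵥ v (n + 1) - ν n ⬝ᵥ v n = ν (n + 1) ⬝ᵥ s n - r n ⬝ᵥ v n := by
    intro n hn
    rw [mem_range] at hn
    rw [hv n hn, hν n hn]
    exact dotProduct_affine_step_sub _ _ _ _ _
  have telescope := sum_range_sub (fun n => ν n ⬝ᵥ v n) N
  rw [sum_congr rfl step, sum_sub_distrib] at telescope
  linear_combination -telescope

end Duality

theorem adjoint_path_kernel_pathwise_general
    (M N : ℕ)
    (x b : ℕ → Fin M → ℝ)
    (α : ℕ → ℝ)
    (f : (Fin M → ℝ) → (Fin M → ℝ)) (σ : (Fin M → ℝ) → ℝ)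
    (Φ : (Fin M → ℝ) → ℝ)
    (Φavg : ℝ)
    (δf : ℕ → Fin M → ℝ) (δσ : ℕ → ℝ)
    (v ν : ℕ → Fin M → ℝ)
    (hv : ∀ n < N,
      v (n + 1) = -(α n) • v n + (jac f (x n)).mulVec (v n) + δf n
        + ((gradVec σ (x n)) ⬝ᵥ v n + δσ n) • b n)
    (hνN : ν N = gradVec Φ (x N))
    (hν : ∀ k < N,
      ν k = -(α k) • ν (k + 1)
        + ((jac f (x k))ᵀ + vecMulVec (gradVec σ (x k)) (b k)).mulVec (ν (k + 1))
        + ((Φ (x N) - Φavg) * (α k / σ (x k))) • b k) :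
    gradVec Φ (x N) ⬝ᵥ v N
      + (Φ (x N) - Φavg) * ∑ n ∈ Finset.range N, (α n / σ (x n)) * (b n ⬝ᵥ v n)
      = ν 0 ⬝ᵥ v 0
        + ∑ k ∈ Finset.range N, ν (k + 1) ⬝ᵥ (δf k + δσ k • b k) := by
  set A : ℕ → Matrix (Fin M) (Fin M) ℝ := fun n =>
    -(α n) • (1 : Matrix (Fin M) (Fin M) ℝ) + jac f (x n) + vecMulVec (b n) (gradVec σ (x n))
  have hv' : ∀ n < N, v (n + 1) = A n *ᵥ v n + (δf n + δσ n • b n) := by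
    intro n hn
    rw [hv n hn]
    simp only [A, add_mulVec, smul_mulVec, one_mulVec, vecMulVec_mulVec, op_smul_eq_smul,
      add_smul]
    abel
  have hν' : ∀ n < N,
      ν n = (A n)ᵀ *ᵥ ν (n + 1) + ((Φ (x N) - Φavg) * (α n / σ (x n))) • b n := by
    intro n hn
    rw [hν n hn]
    simp only [A, transpose_add, transpose_smul, transpose_one, transpose_vecMulVec, add_mulVec,
      smul_mulVec, one_mulVec, add_assoc]
  have duality := dotProduct_tangent_adjoint_duality N hv' hν'
  simp only [smul_dotProduct, smul_eq_mul, mul_assoc, ← mul_sum] at duality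
  rw [← hνN]
  exact duality

/-- pathwise form of the adjoint discrete-time path-kernel
identity.  With the damped tangent process
`v_{n+1} = −α_n v_n + ∇f(x_n) v_n + δf_n + (⟨∇σ(x_n), v_n⟩ + δσ_n) b_n`
and the adjoint covector process `ν_N = ∇Φ(x_N)`,
`ν_k = −α_k ν_{k+1} + (∇f(x_k)ᵀ + ∇σ(x_k) b_kᵀ) ν_{k+1}
        + (Φ(x_N) − Φ^avg)(α_k/σ(x_k)) b_k`,
one has
`⟨∇Φ(x_N), v_N⟩ + (Φ(x_N) − Φ^avg) ∑_{n<N} (α_n/σ(x_n)) ⟨b_n, v_n⟩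
  = ⟨ν_0, v_0⟩ + ∑_{k<N} ⟨ν_{k+1}, δf_k + δσ_k b_k⟩`. -/
theorem adjoint_path_kernel_pathwise
    (M N : ℕ) (hM : 1 ≤ M) (hN : 1 ≤ N)
    (x b : ℕ → Fin M → ℝ)
    (α : ℕ → ℝ)
    (f : (Fin M → ℝ) → (Fin M → ℝ)) (σ : (Fin M → ℝ) → ℝ)
    (hf : ContDiff ℝ 1 f) (hσ : ContDiff ℝ 1 σ)
    (hσne : ∀ n < N, σ (x n) ≠ 0)
    (Φ : (Fin M → ℝ) → ℝ) (hΦ : Differentiable ℝ Φ)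
    (Φavg : ℝ)
    (δf : ℕ → Fin M → ℝ) (δσ : ℕ → ℝ)
    (v ν : ℕ → Fin M → ℝ)
    (hv : ∀ n < N,
      v (n + 1) = -(α n) • v n + (jac f (x n)).mulVec (v n) + δf n
        + ((gradVec σ (x n)) ⬝ᵥ v n + δσ n) • b n)
    (hνN : ν N = gradVec Φ (x N))
    (hν : ∀ k < N,
      ν k = -(α k) • ν (k + 1)
        + ((jac f (x k))ᵀ + vecMulVec (gradVec σ (x k)) (b k)).mulVec (ν (k + 1))
        + ((Φ (x N) - Φavg) * (α k / σ (x k))) • b k) :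
    gradVec Φ (x N) ⬝ᵥ v N
      + (Φ (x N) - Φavg) * ∑ n ∈ Finset.range N, (α n / σ (x n)) * (b n ⬝ᵥ v n)
      = ν 0 ⬝ᵥ v 0
        + ∑ k ∈ Finset.range N, ν (k + 1) ⬝ᵥ (δf k + δσ k • b k) :=
  adjoint_path_kernel_pathwise_general M N x b α f σ Φ Φavg δf δσ v ν hv hνN hν
end

section
/- Adjoint discrete-time path-kernel theorem, conditional form: in the probabilistic setting below, suppose the real number L satisfies the tangent path-kernel formula L = E[⟨∇Φ(x_N), v_N⟩ + (Φ(x_N) − Φ^avg_N) ∑_{n=0}^{N−1} (α_n / σ(x_n)) ⟨b_n, v_n⟩], and that this random variable is integrable. Then L also satisfies the adjoint formula L = E[⟨ν_0, v_0⟩ + ∑_{k=0}^{N−1} ⟨ν_{k+1}, δf(x_k) + δσ(x_k) b_k⟩]. -/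
open Matrix MeasureTheory ProbabilityTheory

/-!
The adjoint recursion is the transposed tangent recursion, with the tangent's source
`δf + δσ b` and the adjoint's source `(Φ(x_N) − Φ^avg_N)(α_k/σ(x_k)) b_k` swapped for each
other. Hence `⟨ν_n, v_n⟩` telescopes along every single path, and the integrands of the
tangent and the adjoint formulas agree pointwise.
-/

section Duality

variable {R : Type*} [CommRing R] {m : Type*} [Fintype m]

theorem dotProduct_eq_add_sum_of_adjoint {N : ℕ} (A : Fin N → Matrix m m R)
    (r s : Fin N → m → R) (v ν : ℕ → m → R)
    (hv : ∀ k : Fin N, v (k + 1) = A k *ᵥ v k + r k)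
    (hν : ∀ k : Fin N, ν k = (A k)ᵀ *ᵥ ν (k + 1) + s k) :
    ν N ⬝ᵥ v N = ν 0 ⬝ᵥ v 0 + ∑ k : Fin N, (ν (k + 1) ⬝ᵥ r k - s k ⬝ᵥ v k) := by
  have step : ∀ k : Fin N,
      ν (k + 1) ⬝ᵥ v (k + 1) - ν k ⬝ᵥ v k = ν (k + 1) ⬝ᵥ r k - s k ⬝ᵥ v k := by
    intro k
    rw [hv k, hν k, dotProduct_add, add_dotProduct, dotProduct_mulVec, mulVec_transpose]
    ring
  rw [← Finset.sum_congr rfl fun k _ => step k,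
    Fin.sum_univ_eq_sum_range (fun k => ν (k + 1) ⬝ᵥ v (k + 1) - ν k ⬝ᵥ v k),
    Finset.sum_range_sub (fun k => ν k ⬝ᵥ v k)]
  ring

def dampedLinearization [DecidableEq m] (a : R) (J : Matrix m m R) (g b : m → R) :
    Matrix m m R :=
  -a • 1 + (J + vecMulVec b g)

theorem dampedLinearization_mulVec [DecidableEq m] (a : R) (J : Matrix m m R) (g b v : m → R) :
    dampedLinearization a J g b *ᵥ v = -a • v + J *ᵥ v + (g ⬝ᵥ v) • b := by
  rw [dampedLinearization, add_mulVec, add_mulVec, smul_mulVec, one_mulVec,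
    vecMulVec_mulVec, op_smul_eq_smul, add_assoc]

theorem dampedLinearization_transpose_mulVec [DecidableEq m] (a : R) (J : Matrix m m R)
    (g b w : m → R) :
    (dampedLinearization a J g b)ᵀ *ᵥ w = -a • w + (Jᵀ + vecMulVec g b) *ᵥ w := by
  rw [dampedLinearization, transpose_add, transpose_smul, transpose_one, transpose_add,
    transpose_vecMulVec, add_mulVec, smul_mulVec, one_mulVec]

end Duality

theorem adjoint_path_kernel_conditional_general
    (M N : ℕ)
    (Ω : Type*) [MeasureSpace Ω]
    -- i.i.d. standard Gaussian noise vectors b_0, …, b_{N−1}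
    (b : Fin N → Ω → Fin M → ℝ)
    -- dynamics and data
    (f : (Fin M → ℝ) → (Fin M → ℝ)) (σ : (Fin M → ℝ) → ℝ)
    (δf : (Fin M → ℝ) → (Fin M → ℝ)) (δσ : (Fin M → ℝ) → ℝ)
    (Φ : (Fin M → ℝ) → ℝ)
    (v0 : Fin M → ℝ)
    -- the path x_{n+1} = f(x_n) + σ(x_n) b_n
    (x : ℕ → Ω → Fin M → ℝ)
    -- Φ^avg_N := E[Φ(x_N)]
    (Φavg : ℝ)
    -- adapted bounded schedule: α_n is a bounded measurable function of b_0, …, b_{n−1}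
    (α : Fin N → Ω → ℝ)
    -- damped tangent process
    (v : ℕ → Ω → Fin M → ℝ)
    (hv0 : ∀ ω, v 0 ω = v0)
    (hv : ∀ ω, ∀ n : ℕ, ∀ h : n < N,
      v (n + 1) ω = -(α ⟨n, h⟩ ω) • v n ω + (jac f (x n ω)).mulVec (v n ω)
        + δf (x n ω)
        + ((gradVec σ (x n ω)) ⬝ᵥ v n ω + δσ (x n ω)) • b ⟨n, h⟩ ω)
    -- adjoint covector process
    (ν : ℕ → Ω → Fin M → ℝ)
    (hνN : ∀ ω, ν N ω = gradVec Φ (x N ω))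
    (hν : ∀ ω, ∀ k : ℕ, ∀ h : k < N,
      ν k ω = -(α ⟨k, h⟩ ω) • ν (k + 1) ω
        + ((jac f (x k ω))ᵀ + vecMulVec (gradVec σ (x k ω)) (b ⟨k, h⟩ ω)).mulVec
            (ν (k + 1) ω)
        + ((Φ (x N ω) - Φavg) * (α ⟨k, h⟩ ω / σ (x k ω))) • b ⟨k, h⟩ ω)
    -- assumption: L satisfies the tangent path-kernel formula, integrably
    (L : ℝ)
    (hL : L = ∫ ω,
      (gradVec Φ (x N ω) ⬝ᵥ v N ω
        + (Φ (x N ω) - Φavg)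
          * ∑ n : Fin N, (α n ω / σ (x (n : ℕ) ω)) * (b n ω ⬝ᵥ v (n : ℕ) ω))) :
    L = ∫ ω,
      (ν 0 ω ⬝ᵥ v0
        + ∑ k : Fin N,
            ν ((k : ℕ) + 1) ω ⬝ᵥ (δf (x (k : ℕ) ω) + δσ (x (k : ℕ) ω) • b k ω)) := by
  rw [hL]
  refine integral_congr_ae (Filter.Eventually.of_forall fun ω => ?_)
  have duality := dotProduct_eq_add_sum_of_adjoint
    (fun k => dampedLinearization (α k ω) (jac f (x k ω)) (gradVec σ (x k ω)) (b k ω))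
    (fun k => δf (x k ω) + δσ (x k ω) • b k ω)
    (fun k => ((Φ (x N ω) - Φavg) * (α k ω / σ (x k ω))) • b k ω)
    (fun n => v n ω) (fun n => ν n ω)
    (fun k => by
      rw [hv ω k k.isLt, dampedLinearization_mulVec, add_smul]
      abel)
    (fun k => by rw [hν ω k k.isLt, dampedLinearization_transpose_mulVec])
  simp only [hνN, hv0, smul_dotProduct, smul_eq_mul, Finset.sum_sub_distrib] at duality
  simp only [duality, Finset.mul_sum, mul_assoc]
  ring

/-- adjoint discrete-time path-kernel theorem, conditional form.
If the real number `L` equals the tangent path-kernel expectation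
`E[⟨∇Φ(x_N), v_N⟩ + (Φ(x_N) − Φ^avg_N) ∑_{n<N} (α_n/σ(x_n)) ⟨b_n, v_n⟩]`
(and that random variable is integrable), then `L` also equals the adjoint
expectation `E[⟨ν_0, v_0⟩ + ∑_{k<N} ⟨ν_{k+1}, δf(x_k) + δσ(x_k) b_k⟩]`. -/
theorem adjoint_path_kernel_conditional
    (M N : ℕ) (hM : 1 ≤ M) (hN : 1 ≤ N)
    (Ω : Type*) [MeasureSpace Ω] [IsProbabilityMeasure (ℙ : Measure Ω)]
    -- i.i.d. standard Gaussian noise vectors b_0, …, b_{N−1}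
    (b : Fin N → Ω → Fin M → ℝ)
    (hb_meas : ∀ n, Measurable (b n))
    (hb_indep : iIndepFun b ℙ)
    (hb_law : ∀ n, Measure.map (b n) ℙ = Measure.pi fun _ : Fin M => gaussianReal 0 1)
    -- dynamics and data
    (f : (Fin M → ℝ) → (Fin M → ℝ)) (σ : (Fin M → ℝ) → ℝ)
    (hf : ContDiff ℝ 1 f) (hσ : ContDiff ℝ 1 σ) (hσpos : ∀ y, 0 < σ y)
    (δf : (Fin M → ℝ) → (Fin M → ℝ)) (δσ : (Fin M → ℝ) → ℝ)
    (hδf : Continuous δf) (hδσ : Continuous δσ)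
    (Φ : (Fin M → ℝ) → ℝ) (hΦ : ContDiff ℝ 1 Φ)
    (x0 v0 : Fin M → ℝ)
    -- the path x_{n+1} = f(x_n) + σ(x_n) b_n
    (x : ℕ → Ω → Fin M → ℝ)
    (hx0 : ∀ ω, x 0 ω = x0)
    (hx : ∀ ω, ∀ n : ℕ, ∀ h : n < N,
      x (n + 1) ω = f (x n ω) + σ (x n ω) • b ⟨n, h⟩ ω)
    -- Φ^avg_N := E[Φ(x_N)]
    (Φavg : ℝ) (hΦavg : Φavg = ∫ ω, Φ (x N ω))
    -- adapted bounded schedule: α_n is a bounded measurable function of b_0, …, b_{n−1}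
    (α : Fin N → Ω → ℝ)
    (hα_bdd : ∀ n, ∃ C, ∀ ω, |α n ω| ≤ C)
    (hα_adapted : ∀ n : Fin N,
      Measurable[MeasurableSpace.comap
        (fun ω => fun i : Fin (n : ℕ) => b (Fin.castLE n.isLt.le i) ω) inferInstance]
        (α n))
    -- damped tangent process
    (v : ℕ → Ω → Fin M → ℝ)
    (hv0 : ∀ ω, v 0 ω = v0)
    (hv : ∀ ω, ∀ n : ℕ, ∀ h : n < N,
      v (n + 1) ω = -(α ⟨n, h⟩ ω) • v n ω + (jac f (x n ω)).mulVec (v n ω)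
        + δf (x n ω)
        + ((gradVec σ (x n ω)) ⬝ᵥ v n ω + δσ (x n ω)) • b ⟨n, h⟩ ω)
    -- adjoint covector process
    (ν : ℕ → Ω → Fin M → ℝ)
    (hνN : ∀ ω, ν N ω = gradVec Φ (x N ω))
    (hν : ∀ ω, ∀ k : ℕ, ∀ h : k < N,
      ν k ω = -(α ⟨k, h⟩ ω) • ν (k + 1) ω
        + ((jac f (x k ω))ᵀ + vecMulVec (gradVec σ (x k ω)) (b ⟨k, h⟩ ω)).mulVec
            (ν (k + 1) ω)
        + ((Φ (x N ω) - Φavg) * (α ⟨k, h⟩ ω / σ (x k ω))) • b ⟨k, h⟩ ω)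
    -- assumption: L satisfies the tangent path-kernel formula, integrably
    (L : ℝ)
    (hInt : Integrable (fun ω =>
      gradVec Φ (x N ω) ⬝ᵥ v N ω
        + (Φ (x N ω) - Φavg)
          * ∑ n : Fin N, (α n ω / σ (x (n : ℕ) ω)) * (b n ω ⬝ᵥ v (n : ℕ) ω)))
    (hL : L = ∫ ω,
      (gradVec Φ (x N ω) ⬝ᵥ v N ω
        + (Φ (x N ω) - Φavg)
          * ∑ n : Fin N, (α n ω / σ (x (n : ℕ) ω)) * (b n ω ⬝ᵥ v (n : ℕ) ω))) :
    L = ∫ ω,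
      (ν 0 ω ⬝ᵥ v0
        + ∑ k : Fin N,
            ν ((k : ℕ) + 1) ω ⬝ᵥ (δf (x (k : ℕ) ω) + δσ (x (k : ℕ) ω) • b k ω)) :=
  adjoint_path_kernel_conditional_general M N Ω b f σ δf δσ Φ v0 x Φavg α v hv0 hv ν hνN hν L hL
end
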